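/- arXiv:1705.08966 — 2 statements merged into one kernel-verified Lean document; each statement's English description precedes it below -/
import Mathlib

section
/- Consider the LP: minimize Σ_{ℓ=1}^r z_ℓ/(NQ) over z ∈ ℝ^r, z ≥ 0, subject to Σ z_ℓ·ℓ ≥ (K-r)NQ/K and Σ z_ℓ·ℓ² ≤ C_total − rNQ/K. If C_total ≥ r·(K-r+1)·NQ/K, then the optimal value is (K-r)/(rK), attained by z_r = (K-r)NQ/(rK), z_ℓ = 0 for ℓ < r. -/
/-!
Feasibility of `z = (K - r) N Q / (r K) • δ_r` is direct computation; the budget hypothesis is exactly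
what the second-moment constraint needs. Optimality is weak duality: since `ℓ ≤ r` on the support,
`r ∑ z_ℓ ≥ ∑ z_ℓ ℓ ≥ (K - r) N Q / K`.
-/

open Finset

theorem sum_Icc_ite_eq_mul {R : Type*} [Semiring R] {r : ℕ} (hr : 1 ≤ r) (c : R) (f : ℕ → R) :
    ∑ ℓ ∈ Icc 1 r, (if ℓ = r then c else 0) * f ℓ = c * f r := by
  simp [ite_mul, hr]

theorem sum_mul_le_mul_sum_of_le {R : Type*} [CommSemiring R] [PartialOrder R] [IsOrderedRing R]
    {ι : Type*} {s : Finset ι} {z w : ι → R} {M : R}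
    (hz : ∀ i ∈ s, 0 ≤ z i) (hw : ∀ i ∈ s, w i ≤ M) :
    ∑ i ∈ s, z i * w i ≤ M * ∑ i ∈ s, z i := by
  rw [mul_sum]
  exact sum_le_sum fun i hi => by
    rw [mul_comm M]
    exact mul_le_mul_of_nonneg_left (hw i hi) (hz i hi)

theorem div_le_sum_Icc_of_le_sum_mul {r : ℕ} (hr : 0 < r) {z : ℕ → ℝ} (hz : ∀ ℓ, 0 ≤ z ℓ) {d : ℝ}
    (hd : d ≤ ∑ ℓ ∈ Icc 1 r, z ℓ * ℓ) :
    d / r ≤ ∑ ℓ ∈ Icc 1 r, z ℓ := by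
  have hmass : ∑ ℓ ∈ Icc 1 r, z ℓ * ℓ ≤ r * ∑ ℓ ∈ Icc 1 r, z ℓ :=
    sum_mul_le_mul_sum_of_le (fun ℓ _ => hz ℓ) fun ℓ hℓ => by exact_mod_cast (mem_Icc.1 hℓ).2
  rw [div_le_iff₀' (by exact_mod_cast hr)]
  exact hd.trans hmass

theorem lower_bound_LP_optimum_general (K r : ℕ) (N Q Ct : ℝ)
    (hr₁ : 1 ≤ r) (hrK : r ≤ K) (hN : 0 < N) (hQ : 0 < Q)
    (hCt : (r : ℝ) * ((K : ℝ) - r + 1) * N * Q / K ≤ Ct)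
    (zstar : ℕ → ℝ)
    (hzstar : ∀ ℓ : ℕ, zstar ℓ = if ℓ = r then ((K : ℝ) - r) * N * Q / ((r : ℝ) * K) else 0) :
    ((∀ ℓ : ℕ, 0 ≤ zstar ℓ) ∧
      ((K : ℝ) - r) * N * Q / K ≤ ∑ ℓ ∈ Icc 1 r, zstar ℓ * (ℓ : ℝ) ∧
      ∑ ℓ ∈ Icc 1 r, zstar ℓ * (ℓ : ℝ) ^ 2 ≤ Ct - (r : ℝ) * N * Q / K ∧
      ∑ ℓ ∈ Icc 1 r, zstar ℓ / (N * Q) = ((K : ℝ) - r) / ((r : ℝ) * K)) ∧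
    (∀ z : ℕ → ℝ, (∀ ℓ, 0 ≤ z ℓ) →
      ((K : ℝ) - r) * N * Q / K ≤ ∑ ℓ ∈ Icc 1 r, z ℓ * (ℓ : ℝ) →
      ∑ ℓ ∈ Icc 1 r, z ℓ * (ℓ : ℝ) ^ 2 ≤ Ct - (r : ℝ) * N * Q / K →
      ((K : ℝ) - r) / ((r : ℝ) * K) ≤ ∑ ℓ ∈ Icc 1 r, z ℓ / (N * Q)) := by
  have hr : (0 : ℝ) < r := by exact_mod_cast hr₁
  have hK : (0 : ℝ) < K := by exact_mod_cast hr₁.trans hrK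
  have hKr : (0 : ℝ) ≤ K - r := sub_nonneg.2 (by exact_mod_cast hrK)
  have hNQ : 0 < N * Q := mul_pos hN hQ
  refine ⟨⟨fun ℓ => ?_, ?_, ?_, ?_⟩, fun z hz hdemand _ => ?_⟩
  · rw [hzstar]
    split <;> positivity
  · simp only [hzstar, sum_Icc_ite_eq_mul hr₁]
    refine le_of_eq ?_
    field_simp
  · simp only [hzstar, sum_Icc_ite_eq_mul hr₁]
    calc ((K : ℝ) - r) * N * Q / (r * K) * (r : ℝ) ^ 2
        = r * ((K : ℝ) - r + 1) * N * Q / K - r * N * Q / K := by field_simp; ring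
      _ ≤ Ct - r * N * Q / K := by gcongr
  · simp only [hzstar, div_eq_mul_inv _ (N * Q), sum_Icc_ite_eq_mul hr₁]
    field_simp
  · calc ((K : ℝ) - r) / (r * K) = ((K - r) * N * Q / K) / r / (N * Q) := by field_simp
      _ ≤ (∑ ℓ ∈ Icc 1 r, z ℓ) / (N * Q) := by
        gcongr
        exact div_le_sum_Icc_of_le_sum_mul hr₁ hz hdemand
      _ = ∑ ℓ ∈ Icc 1 r, z ℓ / (N * Q) := sum_div _ _ _

open Finset in
/-- If the computation budget C_total is at least the CDC requirement
    r(K-r+1)NQ/K, then the lower-bound LP has optimal value (K-r)/(rK),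
    attained by z_r = (K-r)NQ/(rK) and z_ℓ = 0 for ℓ < r. -/
theorem lower_bound_LP_optimum (K r : ℕ) (N Q Ct : ℝ)
    (hK : 2 ≤ K) (hr₁ : 1 ≤ r) (hrK : r ≤ K) (hN : 0 < N) (hQ : 0 < Q)
    (hCt : (r : ℝ) * ((K : ℝ) - r + 1) * N * Q / K ≤ Ct)
    (zstar : ℕ → ℝ)
    (hzstar : ∀ ℓ : ℕ, zstar ℓ = if ℓ = r then ((K : ℝ) - r) * N * Q / ((r : ℝ) * K) else 0) :
    ((∀ ℓ : ℕ, 0 ≤ zstar ℓ) ∧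
      ((K : ℝ) - r) * N * Q / K ≤ ∑ ℓ ∈ Icc 1 r, zstar ℓ * (ℓ : ℝ) ∧
      ∑ ℓ ∈ Icc 1 r, zstar ℓ * (ℓ : ℝ) ^ 2 ≤ Ct - (r : ℝ) * N * Q / K ∧
      ∑ ℓ ∈ Icc 1 r, zstar ℓ / (N * Q) = ((K : ℝ) - r) / ((r : ℝ) * K)) ∧
    (∀ z : ℕ → ℝ, (∀ ℓ, 0 ≤ z ℓ) →
      ((K : ℝ) - r) * N * Q / K ≤ ∑ ℓ ∈ Icc 1 r, z ℓ * (ℓ : ℝ) →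
      ∑ ℓ ∈ Icc 1 r, z ℓ * (ℓ : ℝ) ^ 2 ≤ Ct - (r : ℝ) * N * Q / K →
      ((K : ℝ) - r) / ((r : ℝ) * K) ≤ ∑ ℓ ∈ Icc 1 r, z ℓ / (N * Q)) :=
  lower_bound_LP_optimum_general K r N Q Ct hr₁ hrK hN hQ hCt zstar hzstar
end

section
/- For the LP minimizing Σ_{ℓ=1}^r z_ℓ/(NQ) subject to z ≥ 0, Σ z_ℓ·ℓ ≥ A, Σ z_ℓ·ℓ² ≤ B (with A, B > 0): any feasible z satisfies Σ z_ℓ ≥ A²/B whenever B < r·A, and Σ z_ℓ ≥ A/r always. -/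
namespace Finset

variable {ι R : Type*} [CommSemiring R] [LinearOrder R] [IsStrictOrderedRing R]
  (s : Finset ι) {w f : ι → R}

theorem sq_sum_mul_le_sum_mul_sum_mul_sq [ExistsAddOfLE R] (hw : ∀ i ∈ s, 0 ≤ w i) :
    (∑ i ∈ s, w i * f i) ^ 2 ≤ (∑ i ∈ s, w i) * ∑ i ∈ s, w i * f i ^ 2 :=
  sum_sq_le_sum_mul_sum_of_sq_le_mul s hw (fun i hi => mul_nonneg (hw i hi) (sq_nonneg _))
    fun i _ => (by ring : (w i * f i) ^ 2 = w i * (w i * f i ^ 2)).le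

theorem sum_mul_le_sum_mul_of_le {M : R} (hw : ∀ i ∈ s, 0 ≤ w i) (hf : ∀ i ∈ s, f i ≤ M) :
    ∑ i ∈ s, w i * f i ≤ (∑ i ∈ s, w i) * M := by
  rw [sum_mul]
  exact sum_le_sum fun i hi => mul_le_mul_of_nonneg_left (hf i hi) (hw i hi)

end Finset

open Finset in
theorem lower_bound_LP_feasible_bounds_general (r : ℕ) (A B : ℝ)
    (hA : 0 < A) (hB : 0 < B) (z : ℕ → ℝ) (hz : ∀ ℓ, 0 ≤ z ℓ)
    (h1 : A ≤ ∑ ℓ ∈ Icc 1 r, z ℓ * (ℓ : ℝ))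
    (h2 : ∑ ℓ ∈ Icc 1 r, z ℓ * (ℓ : ℝ) ^ 2 ≤ B) :
    (B < (r : ℝ) * A → A ^ 2 / B ≤ ∑ ℓ ∈ Icc 1 r, z ℓ) ∧
    A / (r : ℝ) ≤ ∑ ℓ ∈ Icc 1 r, z ℓ := by
  have hz' : ∀ ℓ ∈ Icc 1 r, 0 ≤ z ℓ := fun ℓ _ => hz ℓ
  have hS : 0 ≤ ∑ ℓ ∈ Icc 1 r, z ℓ := sum_nonneg hz'
  refine ⟨fun _ => div_le_of_le_mul₀ hB.le hS ?_, div_le_of_le_mul₀ r.cast_nonneg hS ?_⟩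
  · calc A ^ 2 ≤ (∑ ℓ ∈ Icc 1 r, z ℓ * (ℓ : ℝ)) ^ 2 := pow_le_pow_left₀ hA.le h1 2
      _ ≤ (∑ ℓ ∈ Icc 1 r, z ℓ) * ∑ ℓ ∈ Icc 1 r, z ℓ * (ℓ : ℝ) ^ 2 :=
        sq_sum_mul_le_sum_mul_sum_mul_sq _ hz'
      _ ≤ (∑ ℓ ∈ Icc 1 r, z ℓ) * B := mul_le_mul_of_nonneg_left h2 hS
  · exact h1.trans <| sum_mul_le_sum_mul_of_le _ hz' fun ℓ hℓ => by
      exact_mod_cast (mem_Icc.mp hℓ).2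

open Finset in
/-- Any feasible z of the lower-bound LP satisfies Σ z_ℓ ≥ A²/B when B < r·A,
    and Σ z_ℓ ≥ A/r always. -/
theorem lower_bound_LP_feasible_bounds (r : ℕ) (hr : 1 ≤ r) (A B : ℝ)
    (hA : 0 < A) (hB : 0 < B) (z : ℕ → ℝ) (hz : ∀ ℓ, 0 ≤ z ℓ)
    (h1 : A ≤ ∑ ℓ ∈ Icc 1 r, z ℓ * (ℓ : ℝ))
    (h2 : ∑ ℓ ∈ Icc 1 r, z ℓ * (ℓ : ℝ) ^ 2 ≤ B) :
    (B < (r : ℝ) * A → A ^ 2 / B ≤ ∑ ℓ ∈ Icc 1 r, z ℓ) ∧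
    A / (r : ℝ) ≤ ∑ ℓ ∈ Icc 1 r, z ℓ :=
  lower_bound_LP_feasible_bounds_general r A B hA hB z hz h1 h2
end
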